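/- arXiv:1509.01049 — 5 statements merged into one kernel-verified Lean document; each statement's English description precedes it below -/
import Mathlib

section
/- Let H₁ and H₂ be real inner product spaces, let T : H₁ → H₂ be a bounded (continuous) linear operator with operator norm ‖T‖, and let x₁, …, x_k ∈ H₁. Then det G(Tx₁, …, Tx_k) ≤ ‖T‖^{2k} · det G(x₁, …, x_k), where G(y₁, …, y_k) denotes the k×k Gram matrix with (i,j) entry ⟨y_i, y_j⟩. -/
/-!
For every coefficient vector `a`, the quadratic form of a Gram matrix is
`⟪∑ aᵢ xᵢ, ∑ aᵢ xᵢ⟫`, and `∑ aᵢ T xᵢ = T (∑ aᵢ xᵢ)`; hence `‖T‖² G(x) - G(Tx)` is positive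
semidefinite, i.e. `G(Tx) ≤ ‖T‖² G(x)` in the Loewner order. The determinant is monotone on
positive semidefinite matrices: if `0 ≤ A ≤ B` with `A` invertible, conjugating by `A^{-1/2}`
gives `1 ≤ A^{-1/2} B A^{-1/2}`, whose eigenvalues are all at least `1`, so
`det B = det A · det (A^{-1/2} B A^{-1/2}) ≥ det A`. Finally `det (c • G) = cᵏ det G`.
-/

open Matrix

/-- Gram matrix of a finite family of vectors in a real inner product space. -/
noncomputable def gramMatrix {H : Type*} [NormedAddCommGroup H] [InnerProductSpace ℝ H]
    {k : ℕ} (x : Fin k → H) : Matrix (Fin k) (Fin k) ℝ :=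
  Matrix.of fun i j => inner ℝ (x i) (x j)

open scoped MatrixOrder ComplexOrder InnerProductSpace

namespace Matrix

variable {n 𝕜 E F : Type*} [Fintype n] [RCLike 𝕜]
  [NormedAddCommGroup E] [InnerProductSpace 𝕜 E] [NormedAddCommGroup F] [InnerProductSpace 𝕜 F]

theorem gram_comp_le_opNorm_sq_smul (T : E →L[𝕜] F) (v : n → E) :
    gram 𝕜 (T ∘ v) ≤ (‖T‖ ^ 2 : ℝ) • gram 𝕜 v := by
  rw [le_iff]
  refine .of_dotProduct_mulVec_nonneg (((isHermitian_gram 𝕜 v).smul (.all _)).sub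
    (isHermitian_gram 𝕜 _)) fun a => ?_
  set y := ∑ i, a i • v i
  have hTy : ∑ i, a i • (T ∘ v) i = T y := by simp [y, map_sum]
  have hle : ‖T y‖ ^ 2 ≤ ‖T‖ ^ 2 * ‖y‖ ^ 2 := by
    rw [← mul_pow]
    gcongr
    exact T.le_opNorm y
  rw [sub_mulVec, dotProduct_sub, smul_mulVec, dotProduct_smul, star_dotProduct_gram_mulVec,
    star_dotProduct_gram_mulVec, hTy, inner_self_eq_norm_sq_to_K, inner_self_eq_norm_sq_to_K,
    sub_nonneg, RCLike.real_smul_eq_coe_mul]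
  exact_mod_cast hle

variable [DecidableEq n]

theorem one_le_det_of_one_le {C : Matrix n n 𝕜} (hC : 1 ≤ C) : 1 ≤ C.det := by
  have hH : C.IsHermitian := by simpa using (le_iff.mp hC).isHermitian.add isHermitian_one
  have h1 : ∀ i, 1 ≤ hH.eigenvalues i := fun i =>
    (CFC.one_le_iff C hH.isSelfAdjoint).mp hC _ (hH.eigenvalues_mem_spectrum_real i)
  rw [hH.det_eq_prod_eigenvalues, ← RCLike.ofReal_prod, ← RCLike.ofReal_one,
    RCLike.ofReal_le_ofReal]
  exact Finset.one_le_prod fun i _ => h1 i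

theorem det_le_det_of_le {A B : Matrix n n 𝕜} (hA : 0 ≤ A) (hAB : A ≤ B) : A.det ≤ B.det := by
  rcases eq_or_ne A.det 0 with hd | hd
  · exact hd ▸ (hA.trans hAB).posSemidef.det_nonneg
  set S := CFC.sqrt A
  have hSS : S * S = A := CFC.sqrt_mul_sqrt_self A hA
  have hS : IsUnit S.det := by
    rw [isUnit_iff_ne_zero]
    rintro h
    exact hd (by rw [← hSS, det_mul, h, zero_mul])
  have hSinv : star S⁻¹ = S⁻¹ := by
    rw [star_eq_conjTranspose, conjTranspose_nonsing_inv,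
      (CFC.sqrt_nonneg A).posSemidef.isHermitian.eq]
  have hA1 : S⁻¹ * A * S⁻¹ = 1 := by
    rw [← hSS, ← mul_assoc, nonsing_inv_mul _ hS, one_mul, mul_nonsing_inv _ hS]
  have hC : 1 ≤ S⁻¹ * B * S⁻¹ := by
    simpa only [hSinv, hA1] using star_left_conjugate_le_conjugate hAB S⁻¹
  calc A.det = A.det * 1 := (mul_one _).symm
    _ ≤ A.det * (S⁻¹ * B * S⁻¹).det :=
      mul_le_mul_of_nonneg_left (one_le_det_of_one_le hC) hA.posSemidef.det_nonneg
    _ = (S⁻¹.det * S.det) ^ 2 * B.det := by rw [← hSS, det_mul, det_mul, det_mul]; ring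
    _ = B.det := by rw [det_nonsing_inv_mul_det S hS, one_pow, one_mul]

theorem det_gram_comp_le (T : E →L[𝕜] F) (v : n → E) :
    (gram 𝕜 (T ∘ v)).det ≤ (‖T‖ ^ (2 * Fintype.card n) : ℝ) * (gram 𝕜 v).det := by
  refine (det_le_det_of_le (posSemidef_gram 𝕜 _).nonneg
    (gram_comp_le_opNorm_sq_smul T v)).trans_eq ?_
  rw [RCLike.real_smul_eq_coe_smul (K := 𝕜), det_smul, pow_mul]
  push_cast
  rfl

end Matrix

theorem gram_det_bounded_operator {H₁ H₂ : Type*}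
    [NormedAddCommGroup H₁] [InnerProductSpace ℝ H₁]
    [NormedAddCommGroup H₂] [InnerProductSpace ℝ H₂]
    (T : H₁ →L[ℝ] H₂) {k : ℕ} (x : Fin k → H₁) :
    (gramMatrix fun i => T (x i)).det ≤ ‖T‖ ^ (2 * k) * (gramMatrix x).det := by
  have h := det_gram_comp_le T x
  simp only [Fintype.card_fin, RCLike.ofReal_real_eq_id, id] at h
  exact h
end

section
/- Let V be a symmetric positive definite n×n real matrix, let A₁, …, A_m be symmetric n×n real matrices, and define the m×m matrices g and E by g_{μν} = (1/2) tr(V⁻¹ A_μ V⁻¹ A_ν) and E_{μν} = (1/2) tr(A_μ A_ν). Then det g ≤ (λ_max(adj(V)) / det V)^{2m} · det E = (1 / λ_min(V))^{2m} · det E, where adj(V) = det(V) · V⁻¹ is the adjugate of V, λ_max(adj(V)) is the largest eigenvalue of adj(V), and λ_min(V) is the smallest eigenvalue of V. -/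
open Matrix

/-- Largest eigenvalue of a matrix, as the supremum of its real spectrum. -/
noncomputable def lamMax {n : ℕ} (W : Matrix (Fin n) (Fin n) ℝ) : ℝ :=
  sSup (spectrum ℝ W)

/-- Smallest eigenvalue of a matrix, as the infimum of its real spectrum. -/
noncomputable def lamMin {n : ℕ} (W : Matrix (Fin n) (Fin n) ℝ) : ℝ :=
  sInf (spectrum ℝ W)

lemma psd_det_nonneg {k : ℕ} {A : Matrix (Fin k) (Fin k) ℝ} (hA : A.PosSemidef) :
    0 ≤ A.det := by
  rw [hA.1.det_eq_prod_eigenvalues]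
  exact Finset.prod_nonneg fun i _ => hA.eigenvalues_nonneg i

lemma one_le_det_one_add {k : ℕ} {M : Matrix (Fin k) (Fin k) ℝ} (hM : M.PosSemidef) :
    1 ≤ (1 + M).det := by
  have h1 : (1 + M).IsHermitian := Matrix.isHermitian_one.add hM.1
  have key : ∀ i, 1 ≤ h1.eigenvalues i := by
    intro i
    set v : Fin k → ℝ := ⇑(h1.eigenvectorBasis i) with hv
    have hv0 : v ≠ 0 := by
      have := h1.eigenvectorBasis.orthonormal.ne_zero i
      simpa [hv] using this
    have hvv : 0 < v ⬝ᵥ v := by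
      have hne : v ⬝ᵥ v ≠ 0 := fun h => hv0 (dotProduct_self_eq_zero.mp h)
      have hge : 0 ≤ v ⬝ᵥ v := Finset.sum_nonneg fun j _ => mul_self_nonneg (v j)
      exact lt_of_le_of_ne hge (Ne.symm hne)
    have hMv : M *ᵥ v = (h1.eigenvalues i - 1) • v := by
      have h2 := h1.mulVec_eigenvectorBasis i
      have : (1 + M) *ᵥ v = v + M *ᵥ v := by rw [add_mulVec, one_mulVec]
      rw [← hv] at h2
      rw [this] at h2
      have := congrArg (fun w => w - v) h2
      simp only [add_sub_cancel_left] at this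
      rw [this, sub_smul, one_smul]
    have h3 := hM.dotProduct_mulVec_nonneg v
    rw [hMv] at h3
    simp only [star_trivial, dotProduct_smul, smul_eq_mul] at h3
    nlinarith
  rw [h1.det_eq_prod_eigenvalues]
  calc (1:ℝ) = ∏ _i : Fin k, 1 := by simp
  _ ≤ ∏ i, h1.eigenvalues i := Finset.prod_le_prod (by simp) (fun i _ => key i)

open scoped MatrixOrder in
lemma det_le_det_psd {k : ℕ} {A B : Matrix (Fin k) (Fin k) ℝ}
    (hA : A.PosSemidef) (hBA : (B - A).PosSemidef) : A.det ≤ B.det := by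
  have hB : B.PosSemidef := by simpa using hBA.add hA
  rcases eq_or_ne A.det 0 with h0 | h0
  · rw [h0]; exact psd_det_nonneg hB
  · set S := CFC.sqrt A with hSdef
    have hS : S.PosSemidef := (CFC.sqrt_nonneg A).posSemidef
    have hSS : S * S = A := CFC.sqrt_mul_sqrt_self A hA.nonneg
    have hdS : S.det ≠ 0 := fun h => h0 (by rw [← hSS, det_mul, h, zero_mul])
    have hdSu : IsUnit S.det := isUnit_iff_ne_zero.mpr hdS
    have h3 : S⁻¹ᴴ = S⁻¹ := by rw [conjTranspose_nonsing_inv, hS.1]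
    have hM : (S⁻¹ * (B - A) * S⁻¹).PosSemidef := by
      have := hBA.mul_mul_conjTranspose_same S⁻¹
      rwa [h3] at this
    have key : B = S * (1 + S⁻¹ * (B - A) * S⁻¹) * S := by
      rw [mul_add, add_mul, mul_one]
      rw [hSS]
      rw [show S * (S⁻¹ * (B - A) * S⁻¹) * S
            = (S * S⁻¹) * (B - A) * (S⁻¹ * S) by simp only [Matrix.mul_assoc],
          mul_nonsing_inv S hdSu, nonsing_inv_mul S hdSu, one_mul, mul_one]
      abel
    have h1M := one_le_det_one_add hM
    have hdetA : A.det = S.det * S.det := by rw [← hSS, det_mul]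
    have hdSnn : 0 ≤ S.det := psd_det_nonneg hS
    calc A.det = S.det * S.det := hdetA
    _ ≤ S.det * (1 + S⁻¹ * (B - A) * S⁻¹).det * S.det := by nlinarith
    _ = B.det := by rw [← det_mul, ← det_mul, ← key]

lemma trace_conj_diag {n : ℕ} (U : Matrix (Fin n) (Fin n) ℝ)
    (p q : Fin n → ℝ) (X Y : Matrix (Fin n) (Fin n) ℝ) :
    ((U * diagonal p * star U) * X * (U * diagonal q * star U) * Y).trace
      = ∑ i, ∑ j, (p i * (star U * X * U) i j) * (q j * (star U * Y * U) j i) := by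
  have h1 : (U * diagonal p * star U) * X * (U * diagonal q * star U) * Y
      = U * (diagonal p * (star U * X * U) * (diagonal q * (star U * Y)))  := by
    simp only [Matrix.mul_assoc]
  rw [h1, trace_mul_comm]
  have h2 : (diagonal p * (star U * X * U) * (diagonal q * (star U * Y))) * U
      = (diagonal p * (star U * X * U)) * (diagonal q * (star U * Y * U)) := by
    simp only [Matrix.mul_assoc]
  rw [h2]
  set N := star U * X * U with hN
  set N' := star U * Y * U with hN'
  rw [Matrix.trace]
  refine Finset.sum_congr rfl fun i _ => ?_
  rw [Matrix.diag_apply, Matrix.mul_apply]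
  exact Finset.sum_congr rfl fun j _ => by rw [Matrix.diagonal_mul, Matrix.diagonal_mul]

lemma quad_form_trace {n m : ℕ} (W W' : Matrix (Fin n) (Fin n) ℝ)
    (A : Fin m → Matrix (Fin n) (Fin n) ℝ) (x : Fin m → ℝ) :
    x ⬝ᵥ ((Matrix.of fun μ ν : Fin m => (1/2 : ℝ) * (W * A μ * W' * A ν).trace) *ᵥ x)
      = (1/2) * (W * (∑ μ, x μ • A μ) * W' * (∑ ν, x ν • A ν)).trace := by
  simp only [Matrix.mul_sum, Matrix.sum_mul, Matrix.mul_smul, Matrix.smul_mul, trace_sum,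
    trace_smul, smul_eq_mul, dotProduct, mulVec, Matrix.of_apply, Finset.mul_sum]
  rw [Finset.sum_comm]
  refine Finset.sum_congr rfl fun μ _ => ?_
  refine Finset.sum_congr rfl fun ν _ => ?_
  ring

lemma spectrum_conj_diag {n : ℕ} (u : Matrix.unitaryGroup (Fin n) ℝ) (f : Fin n → ℝ) :
    spectrum ℝ ((u : Matrix (Fin n) (Fin n) ℝ) * diagonal f * star (u : Matrix (Fin n) (Fin n) ℝ))
      = Set.range f := by
  rw [Unitary.spectrum_star_right_conjugate, spectrum_diagonal]

lemma inv_spectral {n : ℕ} {V : Matrix (Fin n) (Fin n) ℝ} (hV : V.PosDef) :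
    V⁻¹ = (hV.1.eigenvectorUnitary : Matrix (Fin n) (Fin n) ℝ)
        * diagonal (fun i => (hV.1.eigenvalues i)⁻¹)
        * star (hV.1.eigenvectorUnitary : Matrix (Fin n) (Fin n) ℝ) := by
  apply inv_eq_right_inv
  set U : Matrix (Fin n) (Fin n) ℝ := (hV.1.eigenvectorUnitary : Matrix (Fin n) (Fin n) ℝ) with hU
  have hUU : star U * U = 1 := mem_unitaryGroup_iff'.mp hV.1.eigenvectorUnitary.2
  have hUU' : U * star U = 1 := mem_unitaryGroup_iff.mp hV.1.eigenvectorUnitary.2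
  have hD : diagonal (RCLike.ofReal ∘ hV.1.eigenvalues) = diagonal hV.1.eigenvalues := by
    simp [RCLike.ofReal_real_eq_id]
  have hV' : V = U * diagonal hV.1.eigenvalues * star U := by
    rw [← hD]; exact hV.1.spectral_theorem
  rw [show V * ((U * diagonal fun i => (hV.1.eigenvalues i)⁻¹) * star U)
      = U * diagonal hV.1.eigenvalues * star U * ((U * diagonal fun i => (hV.1.eigenvalues i)⁻¹) * star U) from by rw [← hV']]
  calc U * diagonal hV.1.eigenvalues * star U * (U * diagonal (fun i => (hV.1.eigenvalues i)⁻¹) * star U)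
      = U * (diagonal hV.1.eigenvalues * (star U * U) * diagonal (fun i => (hV.1.eigenvalues i)⁻¹)) * star U := by
        simp only [Matrix.mul_assoc]
    _ = U * (diagonal hV.1.eigenvalues * diagonal (fun i => (hV.1.eigenvalues i)⁻¹)) * star U := by
        rw [hUU, mul_one]
    _ = U * star U := by
        rw [diagonal_mul_diagonal]
        have : (fun i => hV.1.eigenvalues i * (hV.1.eigenvalues i)⁻¹) = fun _ => (1:ℝ) := by
          funext i; exact mul_inv_cancel₀ (hV.eigenvalues_pos i).ne'
        rw [this, diagonal_one, mul_one]
    _ = 1 := hUU'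

theorem det_fisher_matrix_bound {n m : ℕ}
    (V : Matrix (Fin n) (Fin n) ℝ) (hVs : V.IsSymm) (hV : V.PosDef)
    (A : Fin m → Matrix (Fin n) (Fin n) ℝ) (hA : ∀ μ, (A μ).IsSymm) :
    (Matrix.of fun μ ν : Fin m =>
        (1/2) * (V⁻¹ * A μ * V⁻¹ * A ν).trace).det
      ≤ (lamMax (V.det • V⁻¹) / V.det) ^ (2 * m) *
          (Matrix.of fun μ ν : Fin m => (1/2) * (A μ * A ν).trace).det
    ∧ (lamMax (V.det • V⁻¹) / V.det) ^ (2 * m) *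
          (Matrix.of fun μ ν : Fin m => (1/2) * (A μ * A ν).trace).det
      = (1 / lamMin V) ^ (2 * m) *
          (Matrix.of fun μ ν : Fin m => (1/2) * (A μ * A ν).trace).det := by
  rcases Nat.eq_zero_or_pos n with hn | hn
  · -- trivial case n = 0
    subst hn
    have hspec : ∀ W : Matrix (Fin 0) (Fin 0) ℝ, spectrum ℝ W = ∅ := by
      intro W
      ext x
      simp only [Set.mem_empty_iff_false, iff_false, spectrum.mem_iff, not_not]
      exact isUnit_of_subsingleton _
    have hMax : lamMax (V.det • V⁻¹) = 0 := by rw [lamMax, hspec, Real.sSup_empty]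
    have hMin : lamMin V = 0 := by rw [lamMin, hspec, Real.sInf_empty]
    rw [hMax, hMin, zero_div, div_zero]
    refine ⟨?_, rfl⟩
    rcases Nat.eq_zero_or_pos m with hm | hm
    · subst hm
      simp [Matrix.det_fin_zero]
    · have hg0 : (Matrix.of fun μ ν : Fin m =>
          (1/2 : ℝ) * (V⁻¹ * A μ * V⁻¹ * A ν).trace) = 0 := by
        ext μ ν
        simp [Matrix.trace]
      rw [hg0]
      have hmne : (2 * m) ≠ 0 := by omega
      rw [zero_pow hmne, zero_mul]
      have : Nonempty (Fin m) := ⟨⟨0, hm⟩⟩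
      rw [Matrix.det_zero]
  · -- main case n > 0
    have : Nonempty (Fin n) := ⟨⟨0, hn⟩⟩
    set e : Fin n → ℝ := hV.1.eigenvalues with he
    set U : Matrix (Fin n) (Fin n) ℝ := (hV.1.eigenvectorUnitary : Matrix (Fin n) (Fin n) ℝ)
      with hUdef
    have hUU : star U * U = 1 := mem_unitaryGroup_iff'.mp hV.1.eigenvectorUnitary.2
    have hUU' : U * star U = 1 := mem_unitaryGroup_iff.mp hV.1.eigenvectorUnitary.2
    have hepos : ∀ i, 0 < e i := hV.eigenvalues_pos
    have hune : (Finset.univ : Finset (Fin n)).Nonempty := Finset.univ_nonempty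
    obtain ⟨i₀, -, hinf⟩ := Finset.exists_mem_eq_inf' hune e
    have hmin : ∀ i, e i₀ ≤ e i := fun i => by
      rw [← hinf]; exact Finset.inf'_le e (Finset.mem_univ i)
    set c : ℝ := (e i₀)⁻¹ with hc
    have hcpos : 0 < c := inv_pos.mpr (hepos i₀)
    have hinv := inv_spectral hV
    have hdV : (0:ℝ) < V.det := hV.det_pos
    -- the coefficient equals c
    have hsmul : V.det • V⁻¹ = U * diagonal (fun i => V.det * (e i)⁻¹) * star U := by
      rw [hinv]
      rw [show (fun i => V.det * (e i)⁻¹) = V.det • (fun i => (e i)⁻¹) from rfl]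
      rw [diagonal_smul, Matrix.mul_smul, Matrix.smul_mul]
    have hspecMax : spectrum ℝ (V.det • V⁻¹) = Set.range (fun i => V.det * (e i)⁻¹) := by
      rw [hsmul]; exact spectrum_conj_diag hV.1.eigenvectorUnitary _
    have hMax : lamMax (V.det • V⁻¹) = V.det * c := by
      rw [lamMax, hspecMax, ← Set.image_univ, ← Finset.coe_univ,
        ← Finset.sup'_eq_csSup_image _ hune]
      refine le_antisymm (Finset.sup'_le _ _ fun i _ => ?_) ?_
      · exact mul_le_mul_of_nonneg_left (inv_anti₀ (hepos i₀) (hmin i)) hdV.le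
      · rw [hc]
        exact Finset.le_sup' (fun i => V.det * (e i)⁻¹) (Finset.mem_univ i₀)
    have hMin : lamMin V = e i₀ := by
      rw [lamMin, hV.1.spectrum_real_eq_range_eigenvalues, ← Set.image_univ, ← Finset.coe_univ,
        ← Finset.inf'_eq_csInf_image _ hune, hinf]
    have hcoef : lamMax (V.det • V⁻¹) / V.det = c := by
      rw [hMax, mul_comm, mul_div_assoc, div_self hdV.ne', mul_one]
    have heq : lamMax (V.det • V⁻¹) / V.det = 1 / lamMin V := by
      rw [hcoef, hMin, one_div]
    refine ⟨?_, by rw [heq]⟩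
    rw [hcoef]
    -- now prove det g ≤ c^(2m) * det E
    set g := Matrix.of fun μ ν : Fin m => (1/2 : ℝ) * (V⁻¹ * A μ * V⁻¹ * A ν).trace with hg
    set E := Matrix.of fun μ ν : Fin m => (1/2 : ℝ) * (A μ * A ν).trace with hE
    -- quadratic form computations
    have hEform : E = Matrix.of fun μ ν : Fin m =>
        (1/2 : ℝ) * ((1 : Matrix (Fin n) (Fin n) ℝ) * A μ * 1 * A ν).trace := by
      ext μ ν; simp [hE]
    have hone : (1 : Matrix (Fin n) (Fin n) ℝ)
        = U * diagonal (fun _ => (1:ℝ)) * star U := by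
      rw [diagonal_one, mul_one, hUU']
    have quad : ∀ x : Fin m → ℝ, ∃ N : Matrix (Fin n) (Fin n) ℝ,
        (∀ i j, N j i = N i j) ∧
        x ⬝ᵥ (g *ᵥ x) = (1/2) * ∑ i, ∑ j, ((e i)⁻¹ * N i j) * ((e j)⁻¹ * N j i) ∧
        x ⬝ᵥ (E *ᵥ x) = (1/2) * ∑ i, ∑ j, N i j * N j i := by
      intro x
      set M : Matrix (Fin n) (Fin n) ℝ := ∑ μ, x μ • A μ with hM
      have hMsymm : Mᵀ = M := by
        rw [hM, Matrix.transpose_sum]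
        exact Finset.sum_congr rfl fun μ _ => by rw [Matrix.transpose_smul, hA μ]
      set N : Matrix (Fin n) (Fin n) ℝ := star U * M * U with hN
      have hUT : star U = Uᵀ := by
        rw [Matrix.star_eq_conjTranspose]
        ext i j
        simp [conjTranspose_apply]
      have hNsymm : ∀ i j, N j i = N i j := by
        intro i j
        have : Nᵀ = N := by
          rw [hN]
          simp only [Matrix.transpose_mul]
          rw [hMsymm, hUT, Matrix.transpose_transpose, ← Matrix.mul_assoc]
        calc N j i = Nᵀ i j := rfl
        _ = N i j := by rw [this]
      refine ⟨N, hNsymm, ?_, ?_⟩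
      · rw [hg, quad_form_trace, hinv]
        rw [trace_conj_diag]
      · rw [hEform, quad_form_trace, hone]
        rw [trace_conj_diag]
        congr 1
        refine Finset.sum_congr rfl fun i _ => Finset.sum_congr rfl fun j _ => ?_
        rw [one_mul, one_mul]
    -- g is PSD
    have hgH : g.IsHermitian := by
      rw [Matrix.IsHermitian]
      ext μ ν
      simp only [conjTranspose_apply, Matrix.of_apply, star_trivial, hg]
      congr 1
      rw [show V⁻¹ * A ν * V⁻¹ * A μ = (V⁻¹ * A ν) * (V⁻¹ * A μ) by simp only [Matrix.mul_assoc],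
        trace_mul_comm]
      simp only [Matrix.mul_assoc]
    have hEH : E.IsHermitian := by
      rw [Matrix.IsHermitian]
      ext μ ν
      simp only [conjTranspose_apply, Matrix.of_apply, star_trivial, hE]
      rw [trace_mul_comm]
    have hgPSD : g.PosSemidef := by
      refine .of_dotProduct_mulVec_nonneg hgH fun x => ?_
      obtain ⟨N, hNs, hq, -⟩ := quad x
      rw [star_trivial, hq]
      have : 0 ≤ ∑ i, ∑ j, ((e i)⁻¹ * N i j) * ((e j)⁻¹ * N j i) := by
        refine Finset.sum_nonneg fun i _ => Finset.sum_nonneg fun j _ => ?_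
        rw [hNs i j]
        have h1 : 0 ≤ (e i)⁻¹ := (inv_pos.mpr (hepos i)).le
        have h2 : 0 ≤ (e j)⁻¹ := (inv_pos.mpr (hepos j)).le
        nlinarith [mul_nonneg (mul_nonneg h1 h2) (sq_nonneg (N i j))]
      linarith
    have hdiffPSD : ((c^2) • E - g).PosSemidef := by
      refine .of_dotProduct_mulVec_nonneg ?_ ?_
      · rw [Matrix.IsHermitian, conjTranspose_sub, conjTranspose_smul, hEH, hgH, star_trivial]
      · intro x
        obtain ⟨N, hNs, hq, hqE⟩ := quad x
        rw [star_trivial, sub_mulVec, dotProduct_sub, smul_mulVec, dotProduct_smul,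
          smul_eq_mul, hq, hqE]
        have hle : ∑ i, ∑ j, ((e i)⁻¹ * N i j) * ((e j)⁻¹ * N j i)
            ≤ c^2 * ∑ i, ∑ j, N i j * N j i := by
          rw [Finset.mul_sum]
          refine Finset.sum_le_sum fun i _ => ?_
          rw [Finset.mul_sum]
          refine Finset.sum_le_sum fun j _ => ?_
          rw [hNs i j]
          have h1 : (e i)⁻¹ ≤ c := by rw [hc]; exact inv_anti₀ (hepos i₀) (hmin i)
          have h2 : (e j)⁻¹ ≤ c := by rw [hc]; exact inv_anti₀ (hepos i₀) (hmin j)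
          have h1p : 0 < (e i)⁻¹ := inv_pos.mpr (hepos i)
          have h2p : 0 < (e j)⁻¹ := inv_pos.mpr (hepos j)
          nlinarith [sq_nonneg (N i j), mul_le_mul h1 h2 h2p.le hcpos.le]
        have hring : c ^ 2 * (1/2 * ∑ i, ∑ j, N i j * N j i)
            = 1/2 * (c^2 * ∑ i, ∑ j, N i j * N j i) := by ring
        rw [hring]
        linarith
    have hfinal := det_le_det_psd hgPSD hdiffPSD
    have hdet : ((c^2) • E).det = c ^ (2 * m) * E.det := by
      rw [Matrix.det_smul, Fintype.card_fin, ← pow_mul]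
    calc g.det ≤ ((c^2) • E).det := hfinal
    _ = c ^ (2 * m) * E.det := hdet
end

section
/- Let n ≥ 2 and let V be a symmetric positive definite n×n real matrix. Then λ_max(adj(V)) ≤ (tr(V) / (n−1))^{n−1}, where adj(V) = det(V) · V⁻¹ is the adjugate of V and λ_max denotes the largest eigenvalue. (Indeed λ_max(adj(V)) equals the product of the n−1 largest eigenvalues of V, which is bounded by the arithmetic–geometric mean inequality.) -/
/-! The eigenvalues of `det V • V⁻¹` are the numbers `det V / μ` for the eigenvalues `μ` of
`V`, that is, the products of all eigenvalues of `V` but one. For a positive definite `V` such a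
product of `n - 1` positive numbers is at most the `(n - 1)`-th power of their arithmetic mean
(AM-GM), and their sum is at most `tr V`. -/

open Matrix

open Finset
open scoped Pointwise

theorem Real.prod_le_sum_div_card_pow {ι : Type*} (s : Finset ι) {f : ι → ℝ}
    (hf : ∀ i ∈ s, 0 ≤ f i) : ∏ i ∈ s, f i ≤ ((∑ i ∈ s, f i) / #s) ^ #s := by
  rcases s.eq_empty_or_nonempty with rfl | hs
  · simp
  have hprod : 0 ≤ ∏ i ∈ s, f i := prod_nonneg hf
  have amgm := Real.geom_mean_le_arith_mean s (fun _ ↦ 1) f (fun _ _ ↦ zero_le_one)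
    (by simpa using hs) hf
  simp only [Real.rpow_one, sum_const, nsmul_eq_mul, mul_one, one_mul] at amgm
  calc ∏ i ∈ s, f i = ((∏ i ∈ s, f i) ^ (#s : ℝ)⁻¹) ^ #s :=
        (Real.rpow_inv_natCast_pow hprod hs.card_pos.ne').symm
    _ ≤ ((∑ i ∈ s, f i) / #s) ^ #s := pow_le_pow_left₀ (Real.rpow_nonneg hprod _) amgm _

theorem Real.prod_erase_le_sum_div_card_sub_one_pow {ι : Type*} [Fintype ι] [DecidableEq ι]
    {f : ι → ℝ} (hf : ∀ i, 0 ≤ f i) (k : ι) :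
    ∏ i ∈ univ.erase k, f i ≤
      ((∑ i, f i) / (Fintype.card ι - 1 : ℕ)) ^ (Fintype.card ι - 1) := by
  have hcard : #(univ.erase k) = Fintype.card ι - 1 := by
    rw [card_erase_of_mem (mem_univ k), card_univ]
  have hsum : ∑ i ∈ univ.erase k, f i ≤ ∑ i, f i := sum_le_univ_sum_of_nonneg hf
  calc ∏ i ∈ univ.erase k, f i
      ≤ ((∑ i ∈ univ.erase k, f i) / #(univ.erase k)) ^ #(univ.erase k) :=
        Real.prod_le_sum_div_card_pow _ fun i _ ↦ hf i
    _ ≤ ((∑ i, f i) / (Fintype.card ι - 1 : ℕ)) ^ (Fintype.card ι - 1) := by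
      rw [hcard]
      gcongr
      exact div_nonneg (sum_nonneg fun i _ ↦ hf i) (Nat.cast_nonneg _)

theorem Matrix.spectrum_det_smul_inv {n K : Type*} [Fintype n] [DecidableEq n] [Field K]
    (A : Matrix n n K) (hA : A.det ≠ 0) :
    spectrum K (A.det • A⁻¹) = A.det • (spectrum K A)⁻¹ := by
  obtain ⟨u, rfl⟩ := (isUnit_iff_isUnit_det A).mpr hA.isUnit
  rw [← coe_units_inv, ← Units.smul_mk0 hA, spectrum.unit_smul_eq_smul, spectrum.map_inv]
  rfl

theorem Matrix.IsHermitian.spectrum_det_smul_inv {n : Type*} [Fintype n] [DecidableEq n]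
    {A : Matrix n n ℝ} (hA : A.IsHermitian) (hdet : A.det ≠ 0) :
    spectrum ℝ (A.det • A⁻¹) =
      Set.range fun k ↦ ∏ i ∈ univ.erase k, hA.eigenvalues i := by
  have hdet_eq (k : n) : A.det = hA.eigenvalues k * ∏ i ∈ univ.erase k, hA.eigenvalues i := by
    rw [mul_prod_erase _ _ (mem_univ k)]
    simpa using hA.det_eq_prod_eigenvalues
  rw [Matrix.spectrum_det_smul_inv A hdet, hA.spectrum_real_eq_range_eigenvalues, Set.inv_range,
    ← Set.range_smul]
  refine congrArg Set.range (funext fun k ↦ ?_)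
  have hk : hA.eigenvalues k ≠ 0 := left_ne_zero_of_mul (hdet_eq k ▸ hdet)
  rw [smul_eq_mul, hdet_eq k, mul_comm, inv_mul_cancel_left₀ hk]

theorem lamMax_adjugate_le_general {n : ℕ} (hn : 2 ≤ n)
    (V : Matrix (Fin n) (Fin n) ℝ) (hV : V.PosDef) :
    lamMax (V.det • V⁻¹) ≤ (V.trace / ((n : ℝ) - 1)) ^ (n - 1) := by
  have hA := hV.isHermitian
  have : Nonempty (Fin n) := ⟨⟨0, by omega⟩⟩
  have hcast : ((n - 1 : ℕ) : ℝ) = n - 1 := Nat.cast_pred (by omega)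
  rw [lamMax, hA.spectrum_det_smul_inv hV.det_pos.ne']
  refine csSup_le (Set.range_nonempty _) ?_
  rintro _ ⟨k, rfl⟩
  calc ∏ i ∈ univ.erase k, hA.eigenvalues i
      ≤ ((∑ i, hA.eigenvalues i) / (n - 1 : ℕ)) ^ (n - 1) := by
        simpa using
          Real.prod_erase_le_sum_div_card_sub_one_pow (fun i ↦ (hV.eigenvalues_pos i).le) k
    _ = (V.trace / ((n : ℝ) - 1)) ^ (n - 1) := by simp [hA.trace_eq_sum_eigenvalues, hcast]

theorem lamMax_adjugate_le {n : ℕ} (hn : 2 ≤ n)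
    (V : Matrix (Fin n) (Fin n) ℝ) (hVs : V.IsSymm) (hV : V.PosDef) :
    lamMax (V.det • V⁻¹) ≤ (V.trace / ((n : ℝ) - 1)) ^ (n - 1) :=
  lamMax_adjugate_le_general hn V hV
end

section
/- Let n ≥ 2, m ≥ 1, let 𝐄 > 0 be a real number, let V be a symmetric positive definite n×n real matrix with tr(V) ≤ 𝐄, and let A₁, …, A_m be symmetric n×n real matrices; define the m×m matrices g and E by g_{μν} = (1/2) tr(V⁻¹ A_μ V⁻¹ A_ν) and E_{μν} = (1/2) tr(A_μ A_ν). Then the energy-regularized volume element satisfies log(1 + (det V)^m) · √(det g) ≤ √(det E) · (𝐄/(n−1))^{m(n−1)}. In particular, θ ↦ Φ(V(θ))·√(det g(θ)) with Φ(V) = H(𝐄 − tr V)·log(1 + (det V)^m) (H the Heaviside step function) is uniformly bounded on any set of parameters where V is positive definite. -/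
open Matrix

open scoped MatrixOrder in
noncomputable def Matrix.PosSemidef.sqrt {k : ℕ} {M : Matrix (Fin k) (Fin k) ℝ} (_h : M.PosSemidef) :
    Matrix (Fin k) (Fin k) ℝ := CFC.sqrt M

open scoped MatrixOrder in
theorem Matrix.PosSemidef.sqrt_mul_self {k : ℕ} {M : Matrix (Fin k) (Fin k) ℝ} (h : M.PosSemidef) :
    h.sqrt * h.sqrt = M := CFC.sqrt_mul_sqrt_self M h.nonneg

open scoped MatrixOrder in
theorem Matrix.PosSemidef.posSemidef_sqrt {k : ℕ} {M : Matrix (Fin k) (Fin k) ℝ}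
    (h : M.PosSemidef) : h.sqrt.PosSemidef := (CFC.sqrt_nonneg M).posSemidef

section Helpers

variable {k : ℕ}

private lemma psd_diag_nonneg' {M : Matrix (Fin k) (Fin k) ℝ} (h : M.PosSemidef) (i : Fin k) :
    0 ≤ M i i := by simpa using h.dotProduct_mulVec_nonneg (Pi.single i 1)

private lemma psd_trace_nonneg' {M : Matrix (Fin k) (Fin k) ℝ} (h : M.PosSemidef) :
    0 ≤ M.trace :=
  Finset.sum_nonneg fun i _ => psd_diag_nonneg' h i

private lemma trace_mul_psd_nonneg' {P Q : Matrix (Fin k) (Fin k) ℝ}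
    (hP : P.PosSemidef) (hQ : Q.PosSemidef) : 0 ≤ (P * Q).trace := by
  have h1 : P = hP.sqrt * hP.sqrt := hP.sqrt_mul_self.symm
  have h2 : (P * Q).trace = (hP.sqrt * Q * hP.sqrt).trace := by
    rw [trace_mul_cycle, ← h1]
  rw [h2]
  have hs : hP.sqrt.IsHermitian := hP.posSemidef_sqrt.isHermitian
  have : (hP.sqrt * Q * hP.sqrt).PosSemidef := by
    have := hQ.mul_mul_conjTranspose_same hP.sqrt
    rwa [hs.eq] at this
  exact psd_trace_nonneg' this

private lemma psd_det_nonneg' {M : Matrix (Fin k) (Fin k) ℝ} (h : M.PosSemidef) :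
    0 ≤ M.det := by
  rw [h.isHermitian.det_eq_prod_eigenvalues]
  exact Finset.prod_nonneg fun i _ => by simpa using h.eigenvalues_nonneg i

private lemma det_one_add_psd' {Q : Matrix (Fin k) (Fin k) ℝ} (hQ : Q.PosSemidef) :
    1 ≤ (1 + Q).det := by
  have hH := hQ.isHermitian
  set U := hH.eigenvectorUnitary
  have hsp := hH.spectral_theorem
  rw [Unitary.conjStarAlgAut_apply] at hsp
  have hU1 : (U : Matrix (Fin k) (Fin k) ℝ) * (star U : Matrix (Fin k) (Fin k) ℝ) = 1 := by
    exact_mod_cast (Unitary.mul_star_self_of_mem U.2)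
  have h1 : (1 : Matrix (Fin k) (Fin k) ℝ) + Q
      = (U : Matrix (Fin k) (Fin k) ℝ) * (1 + diagonal (RCLike.ofReal ∘ hH.eigenvalues)) *
        (star U : Matrix (Fin k) (Fin k) ℝ) := by
    rw [mul_add, add_mul, mul_one, hU1, ← hsp]
  have hU2 : (star U : Matrix (Fin k) (Fin k) ℝ) * (U : Matrix (Fin k) (Fin k) ℝ) = 1 := by
    exact_mod_cast (Unitary.star_mul_self_of_mem U.2)
  rw [h1, det_mul, det_mul, mul_comm, ← mul_assoc, ← det_mul, hU2, det_one, one_mul]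
  have : (1 : Matrix (Fin k) (Fin k) ℝ) + diagonal (RCLike.ofReal ∘ hH.eigenvalues)
      = diagonal (fun i => 1 + hH.eigenvalues i) := by
    rw [← diagonal_one, diagonal_add]
    rfl
  rw [this, det_diagonal]
  calc (1:ℝ) = ∏ _i : Fin k, 1 := by simp
    _ ≤ _ := Finset.prod_le_prod (by simp) (fun i _ => by
        have := hQ.eigenvalues_nonneg i; simpa using by linarith)

private lemma det_le_det_psd' {G E : Matrix (Fin k) (Fin k) ℝ}
    (hG : G.PosSemidef) (hEG : (E - G).PosSemidef) : G.det ≤ E.det := by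
  have hE : E.PosSemidef := by
    have := hG.add hEG
    simpa using this
  by_cases hd : G.det = 0
  · rw [hd]; exact psd_det_nonneg' hE
  · have hGu : IsUnit G.det := isUnit_iff_ne_zero.mpr hd
    set S := hG.sqrt with hSdef
    have hS : S.PosSemidef := hG.posSemidef_sqrt
    have hSS : S * S = G := hG.sqrt_mul_self
    have hdS : IsUnit S.det := by
      have : S.det * S.det = G.det := by rw [← det_mul, hSS]
      exact isUnit_iff_ne_zero.mpr (fun h0 => hd (by rw [← this, h0, mul_zero]))
    have hSinv : S * S⁻¹ = 1 := mul_nonsing_inv S hdS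
    have hSinv' : S⁻¹ * S = 1 := nonsing_inv_mul S hdS
    have hSh : Sᴴ = S := hS.isHermitian.eq
    have hSinvh : (S⁻¹)ᴴ = S⁻¹ := by rw [conjTranspose_nonsing_inv, hSh]
    set Q := S⁻¹ * (E - G) * S⁻¹ with hQdef
    have hQ : Q.PosSemidef := by
      have := hEG.mul_mul_conjTranspose_same S⁻¹
      rwa [hSinvh] at this
    have hE2 : E = S * (1 + Q) * S := by
      rw [hQdef, mul_add, add_mul, mul_one, hSS]
      rw [show S * (S⁻¹ * (E - G) * S⁻¹) * S = (S * S⁻¹) * (E - G) * (S⁻¹ * S) by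
        noncomm_ring]
      rw [hSinv, hSinv', one_mul, mul_one]
      abel
    calc G.det = G.det * 1 := (mul_one _).symm
      _ ≤ G.det * (1 + Q).det := by
          exact mul_le_mul_of_nonneg_left (det_one_add_psd' hQ) (psd_det_nonneg' hG)
      _ = E.det := by rw [hE2, det_mul, det_mul, ← hSS, det_mul]; ring

private lemma spectral_package' {n : ℕ} (hn : 0 < n) {V : Matrix (Fin n) (Fin n) ℝ}
    (hV : V.PosDef) :
    ∃ (c : ℝ) (lam : Fin n → ℝ) (i₀ : Fin n),
      0 < c ∧ (∀ i, c ≤ lam i) ∧ lam i₀ = c ∧ V.det = ∏ i, lam i ∧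
      V.trace = ∑ i, lam i ∧
      (c⁻¹ • (1 : Matrix (Fin n) (Fin n) ℝ) - V⁻¹).PosSemidef := by
  have hW : (V⁻¹).PosDef := hV.inv
  set W := V⁻¹ with hWdef
  have hH : W.IsHermitian := hW.isHermitian
  set μ := hH.eigenvalues with hmu
  have hμpos : ∀ i, 0 < μ i := hW.eigenvalues_pos
  haveI : Nonempty (Fin n) := ⟨⟨0, hn⟩⟩
  obtain ⟨i₀, -, hmax⟩ := Finset.exists_max_image Finset.univ μ
    ⟨Classical.arbitrary _, Finset.mem_univ _⟩
  set c' := μ i₀ with hc'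
  have hc'pos : 0 < c' := hμpos i₀
  set U : Matrix (Fin n) (Fin n) ℝ := (hH.eigenvectorUnitary : Matrix (Fin n) (Fin n) ℝ) with hU
  have hUU : U * star U = 1 := by
    exact_mod_cast (Unitary.mul_star_self_of_mem hH.eigenvectorUnitary.2)
  have hUU' : star U * U = 1 := by
    exact_mod_cast (Unitary.star_mul_self_of_mem hH.eigenvectorUnitary.2)
  have hsp : W = U * diagonal μ * star U := by
    have := hH.spectral_theorem
    simpa [RCLike.ofReal_real_eq_id] using this
  set lam : Fin n → ℝ := fun i => (μ i)⁻¹ with hlam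
  have hVW : V = U * diagonal lam * star U := by
    have h1 : W * (U * diagonal lam * star U) = 1 := by
      rw [hsp]
      rw [show U * diagonal μ * star U * (U * diagonal lam * star U)
          = U * (diagonal μ * (star U * U) * diagonal lam) * star U by noncomm_ring]
      rw [hUU', mul_one, diagonal_mul_diagonal]
      have : (fun i => μ i * lam i) = fun _ => 1 := by
        funext i; exact mul_inv_cancel₀ (hμpos i).ne'
      rw [this, diagonal_one, mul_one, hUU]
    have h2 : W⁻¹ = U * diagonal lam * star U := inv_eq_right_inv h1
    rw [← h2, hWdef, nonsing_inv_nonsing_inv V (isUnit_iff_ne_zero.mpr hV.det_pos.ne')]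
  refine ⟨c'⁻¹, lam, i₀, by positivity, ?_, rfl, ?_, ?_, ?_⟩
  · intro i
    exact inv_anti₀ (hμpos i) (hmax i (Finset.mem_univ i))
  · rw [hVW, det_mul, det_mul, mul_comm, ← mul_assoc, ← det_mul, hUU', det_one, one_mul,
      det_diagonal]
  · rw [hVW, trace_mul_cycle, hUU', one_mul, trace_diagonal]
  · rw [inv_inv, hsp]
    have h1 : c' • (1 : Matrix (Fin n) (Fin n) ℝ) - U * diagonal μ * star U
        = U * diagonal (fun i => c' - μ i) * star U := by
      have hdd : diagonal (fun i => c' - μ i)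
          = c' • (1 : Matrix (Fin n) (Fin n) ℝ) - diagonal μ := by
        ext i j
        rcases eq_or_ne i j with rfl | h
        · simp
        · simp [diagonal_apply_ne _ h, Matrix.one_apply_ne h]
      simp only [hdd, mul_sub, sub_mul, mul_smul_comm, smul_mul_assoc, mul_one, hUU]
    rw [h1]
    have hd : (diagonal (fun i => c' - μ i)).PosSemidef :=
      PosSemidef.diagonal (fun i => sub_nonneg.mpr (hmax i (Finset.mem_univ i)))
    have := hd.mul_mul_conjTranspose_same U
    simpa [Matrix.star_eq_conjTranspose] using this

private lemma quad_expand' {m n : ℕ} (x : Fin m → ℝ) (g h : Fin m → Matrix (Fin n) (Fin n) ℝ) :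
    x ⬝ᵥ ((Matrix.of fun μ ν => (1/2) * (g μ * h ν).trace) *ᵥ x)
      = (1/2) * ((∑ μ, x μ • g μ) * (∑ ν, x ν • h ν)).trace := by
  simp only [dotProduct, mulVec, of_apply, Matrix.sum_mul, Matrix.mul_sum,
    Matrix.smul_mul, Matrix.mul_smul, trace_sum, trace_smul, smul_eq_mul,
    Finset.mul_sum, Finset.sum_mul]
  rw [Finset.sum_comm]
  refine Finset.sum_congr rfl fun μ _ => Finset.sum_congr rfl fun ν _ => by ring

end Helpers

theorem energy_regularized_volume_element_bound {n m : ℕ} (hn : 2 ≤ n) (hm : 1 ≤ m)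
    (Ebound : ℝ) (hEbound : 0 < Ebound)
    (V : Matrix (Fin n) (Fin n) ℝ) (hVs : V.IsSymm) (hV : V.PosDef)
    (htr : V.trace ≤ Ebound)
    (A : Fin m → Matrix (Fin n) (Fin n) ℝ) (hA : ∀ μ, (A μ).IsSymm) :
    Real.log (1 + V.det ^ m) *
      Real.sqrt (Matrix.of fun μ ν : Fin m =>
        (1/2) * (V⁻¹ * A μ * V⁻¹ * A ν).trace).det
    ≤ Real.sqrt (Matrix.of fun μ ν : Fin m =>
        (1/2) * (A μ * A ν).trace).det * (Ebound / ((n : ℝ) - 1)) ^ (m * (n - 1)) := by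
  obtain ⟨c, lam, i₀, hc, hclam, hlami, hdetV, htrV, hPSDW⟩ :=
    spectral_package' (by omega : 0 < n) hV
  set W := V⁻¹ with hWdef
  have hW : W.PosDef := hV.inv
  set g : Matrix (Fin m) (Fin m) ℝ :=
    Matrix.of fun μ ν : Fin m => (1/2) * (W * A μ * W * A ν).trace with hgdef
  set E : Matrix (Fin m) (Fin m) ℝ :=
    Matrix.of fun μ ν : Fin m => (1/2) * (A μ * A ν).trace with hEdef
  have hAh : ∀ μ, (A μ)ᴴ = A μ := fun μ => by
    rw [conjTranspose_eq_transpose_of_trivial]; exact (hA μ)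
  have hWh : Wᴴ = W := hW.isHermitian.eq
  -- quadratic forms
  have hformE : ∀ x : Fin m → ℝ,
      x ⬝ᵥ (E *ᵥ x) = (1/2) * ((∑ ν, x ν • A ν) * (∑ ν, x ν • A ν)).trace := by
    intro x; exact quad_expand' x A A
  have hformg : ∀ x : Fin m → ℝ,
      x ⬝ᵥ (g *ᵥ x) = (1/2) *
        ((W * (∑ ν, x ν • A ν) * W) * (∑ ν, x ν • A ν)).trace := by
    intro x
    have h0 : x ⬝ᵥ (g *ᵥ x)
        = (1/2) * ((∑ μ, x μ • (W * A μ * W)) * (∑ ν, x ν • A ν)).trace :=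
      quad_expand' x (fun μ => W * A μ * W) A
    have h1 : (∑ μ, x μ • (W * A μ * W)) = W * (∑ ν, x ν • A ν) * W := by
      simp [Matrix.mul_sum, Matrix.sum_mul, Matrix.mul_smul, Matrix.smul_mul]
    rw [h0, h1]
  -- symmetry of sums
  have hSh : ∀ x : Fin m → ℝ, (∑ ν, x ν • A ν)ᴴ = (∑ ν, x ν • A ν) := by
    intro x
    rw [conjTranspose_sum]
    refine Finset.sum_congr rfl fun ν _ => ?_
    rw [conjTranspose_smul, hAh]
    simp
  -- E is PSD
  have hEpsd : E.PosSemidef := by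
    refine .of_dotProduct_mulVec_nonneg ?_ ?_
    · ext μ ν
      simp only [conjTranspose_apply, hEdef, of_apply, star_trivial]
      rw [trace_mul_comm]
    · intro x
      rw [star_trivial, hformE]
      have h2 : ((∑ ν, x ν • A ν) * (∑ ν, x ν • A ν)).PosSemidef := by
        have := posSemidef_conjTranspose_mul_self (∑ ν, x ν • A ν)
        rwa [hSh] at this
      have := psd_trace_nonneg' h2
      positivity
  -- g is PSD
  have hgherm : g.IsHermitian := by
    ext μ ν
    simp only [conjTranspose_apply, hgdef, of_apply, star_trivial]
    rw [show W * A ν * W * A μ = (W * A ν) * (W * A μ) by noncomm_ring,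
      trace_mul_comm, show (W * A μ) * (W * A ν) = W * A μ * W * A ν by noncomm_ring]
  have hgpsd : g.PosSemidef := by
    refine .of_dotProduct_mulVec_nonneg hgherm fun x => ?_
    rw [star_trivial, hformg]
    set S := ∑ ν, x ν • A ν with hSdef
    have hSWS : (S * W * S).PosSemidef := by
      have := hW.posSemidef.conjTranspose_mul_mul_same S
      rwa [hSh] at this
    have h3 : (W * S * W) * S = W * (S * W * S) := by noncomm_ring
    rw [h3]
    have := trace_mul_psd_nonneg' hW.posSemidef hSWS
    positivity
  -- key trace inequality : E - c^2 • g is PSD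
  have hdiff : (E - (c^2) • g).PosSemidef := by
    refine .of_dotProduct_mulVec_nonneg ?_ ?_
    · have h1 : ((c^2) • g).IsHermitian := by
        rw [Matrix.IsHermitian, conjTranspose_smul, hgherm.eq]
        simp
      exact hEpsd.isHermitian.sub h1
    · intro x
      rw [star_trivial, sub_mulVec, dotProduct_sub, smul_mulVec,
        dotProduct_smul, smul_eq_mul, hformE, hformg]
      set S := ∑ ν, x ν • A ν with hSdef
      have hSWS : (S * W * S).PosSemidef := by
        have := hW.posSemidef.conjTranspose_mul_mul_same S
        rwa [hSh] at this
      have hSS : (S * S).PosSemidef := by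
        have := posSemidef_conjTranspose_mul_self S
        rwa [hSh] at this
      have t1 : 0 ≤ ((c⁻¹ • (1 : Matrix (Fin n) (Fin n) ℝ) - W) * (S * W * S)).trace :=
        trace_mul_psd_nonneg' hPSDW hSWS
      have t2 : 0 ≤ ((c⁻¹ • (1 : Matrix (Fin n) (Fin n) ℝ) - W) * (S * S)).trace :=
        trace_mul_psd_nonneg' hPSDW hSS
      rw [sub_mul, smul_mul_assoc, one_mul, trace_sub, trace_smul, smul_eq_mul,
        sub_nonneg] at t1 t2
      have e1 : (W * (S * W * S)).trace = ((W * S * W) * S).trace := by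
        rw [show W * (S * W * S) = (W * S * W) * S by noncomm_ring]
      have e2 : (S * W * S).trace = (W * (S * S)).trace := by
        rw [trace_mul_cycle, trace_mul_comm]
      -- chain
      have hWSWS : ((W * S * W) * S).trace ≤ c⁻¹ * (c⁻¹ * (S * S).trace) := by
        calc ((W * S * W) * S).trace = (W * (S * W * S)).trace := e1.symm
          _ ≤ c⁻¹ * (S * W * S).trace := t1
          _ = c⁻¹ * (W * (S * S)).trace := by rw [e2]
          _ ≤ c⁻¹ * (c⁻¹ * (S * S).trace) := by
              exact mul_le_mul_of_nonneg_left t2 (by positivity)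
      have hc2 : c^2 * (c⁻¹ * (c⁻¹ * (S * S).trace)) = (S * S).trace := by
        field_simp
      nlinarith [sq_nonneg c, mul_le_mul_of_nonneg_left hWSWS (by positivity : (0:ℝ) ≤ c^2)]
  -- determinant comparison
  have hc2gpsd : ((c^2) • g).PosSemidef := by
    refine .of_dotProduct_mulVec_nonneg ?_ fun x => ?_
    · rw [Matrix.IsHermitian, conjTranspose_smul, hgherm.eq]; simp
    · rw [smul_mulVec, dotProduct_smul, smul_eq_mul]
      have := hgpsd.dotProduct_mulVec_nonneg x
      rw [star_trivial] at this ⊢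
      positivity
  have hkey : (c^2)^m * g.det ≤ E.det := by
    have := det_le_det_psd' hc2gpsd hdiff
    rwa [det_smul, Fintype.card_fin] at this
  have hgd : 0 ≤ g.det := psd_det_nonneg' hgpsd
  have hEd : 0 ≤ E.det := psd_det_nonneg' hEpsd
  -- sqrt comparison
  set Q : ℝ := Ebound / ((n : ℝ) - 1) with hQdef
  have hn1 : (1:ℝ) ≤ (n : ℝ) - 1 := by
    have : (2:ℝ) ≤ (n:ℝ) := by exact_mod_cast hn
    linarith
  have hQpos : 0 < Q := div_pos hEbound (by linarith)
  have hsqrt : c ^ m * Real.sqrt g.det ≤ Real.sqrt E.det := by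
    have h1 : Real.sqrt ((c^2)^m * g.det) ≤ Real.sqrt E.det := Real.sqrt_le_sqrt hkey
    have h2 : Real.sqrt ((c^2)^m * g.det) = c ^ m * Real.sqrt g.det := by
      rw [Real.sqrt_mul (by positivity), show (c^2)^m = (c^m)^2 by ring,
        Real.sqrt_sq (by positivity)]
    rwa [h2] at h1
  -- determinant of V bound
  have hlampos : ∀ i, 0 < lam i := fun i => lt_of_lt_of_le hc (hclam i)
  have hcard : (Finset.univ.erase i₀).card = n - 1 := by
    rw [Finset.card_erase_of_mem (Finset.mem_univ _), Finset.card_univ, Fintype.card_fin]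
  have hsum_erase : ∑ i ∈ Finset.univ.erase i₀, lam i ≤ Ebound := by
    have : ∑ i ∈ Finset.univ.erase i₀, lam i = (∑ i, lam i) - lam i₀ := by
      rw [Finset.sum_erase_eq_sub (Finset.mem_univ _)]
    rw [this, ← htrV, hlami]
    linarith
  have hprod_erase : ∏ i ∈ Finset.univ.erase i₀, lam i ≤ Q ^ (n - 1) := by
    -- AM-GM
    have hcardpos : 0 < ((n:ℝ) - 1) := by linarith
    have hamgm := Real.geom_mean_le_arith_mean (Finset.univ.erase i₀)
      (fun _ => (1:ℝ)) lam (fun _ _ => zero_le_one)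
      (by
        rw [Finset.sum_const, hcard, nsmul_eq_mul]
        have : ((n-1 : ℕ) : ℝ) = (n:ℝ) - 1 := by
          have := Nat.cast_sub (by omega : 1 ≤ n) (R := ℝ); simpa using this
        rw [this, mul_one]; linarith)
      (fun i _ => (hlampos i).le)
    simp only [Real.rpow_one, Finset.sum_const, hcard, nsmul_eq_mul, mul_one, one_mul] at hamgm
    have hcast : ((n-1 : ℕ) : ℝ) = (n:ℝ) - 1 := by
      have := Nat.cast_sub (by omega : 1 ≤ n) (R := ℝ); simpa using this
    rw [hcast] at hamgm
    -- hamgm : (∏ lam) ^ ((n:ℝ)-1)⁻¹ ≤ (∑ lam) / ((n:ℝ)-1)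
    have hP0 : 0 ≤ ∏ i ∈ Finset.univ.erase i₀, lam i :=
      Finset.prod_nonneg fun i _ => (hlampos i).le
    have h5 : ((∏ i ∈ Finset.univ.erase i₀, lam i) ^ (((n:ℝ)-1)⁻¹)) ^ ((n:ℝ)-1)
        ≤ ((∑ i ∈ Finset.univ.erase i₀, lam i) / ((n:ℝ)-1)) ^ ((n:ℝ)-1) := by
      apply Real.rpow_le_rpow (Real.rpow_nonneg hP0 _) hamgm (by linarith)
    have hne : ((n:ℝ) - 1) ≠ 0 := by linarith
    calc ∏ i ∈ Finset.univ.erase i₀, lam i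
        = ((∏ i ∈ Finset.univ.erase i₀, lam i) ^ (((n:ℝ)-1)⁻¹)) ^ ((n:ℝ)-1) :=
          (Real.rpow_inv_rpow hP0 hne).symm
      _ ≤ ((∑ i ∈ Finset.univ.erase i₀, lam i) / ((n:ℝ)-1)) ^ ((n:ℝ)-1) := h5
      _ = ((∑ i ∈ Finset.univ.erase i₀, lam i) / ((n:ℝ)-1)) ^ ((n-1:ℕ)) := by
          rw [← Real.rpow_natCast _ (n-1), hcast]
      _ ≤ Q ^ (n-1) := by
          have hs0 : 0 ≤ ∑ i ∈ Finset.univ.erase i₀, lam i :=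
            Finset.sum_nonneg fun i _ => (hlampos i).le
          apply pow_le_pow_left₀ (div_nonneg hs0 (by linarith))
          rw [hQdef]
          exact div_le_div_of_nonneg_right hsum_erase (by linarith)
  have hdetVle : V.det ≤ c * Q ^ (n-1) := by
    rw [hdetV, ← Finset.mul_prod_erase Finset.univ lam (Finset.mem_univ i₀), hlami]
    exact mul_le_mul_of_nonneg_left hprod_erase hc.le
  -- log bound
  have hdV : 0 < V.det := hV.det_pos
  have hlog : Real.log (1 + V.det ^ m) ≤ c ^ m * Q ^ (m * (n-1)) := by
    have h1 : Real.log (1 + V.det ^ m) ≤ V.det ^ m := by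
      have := Real.log_le_sub_one_of_pos (show (0:ℝ) < 1 + V.det ^ m by positivity)
      linarith
    have h2 : V.det ^ m ≤ (c * Q ^ (n-1)) ^ m :=
      pow_le_pow_left₀ hdV.le hdetVle m
    have h3 : (c * Q ^ (n-1)) ^ m = c ^ m * Q ^ (m * (n-1)) := by
      rw [mul_pow, ← pow_mul, Nat.mul_comm]
    linarith
  have hlog0 : 0 ≤ Real.log (1 + V.det ^ m) :=
    Real.log_nonneg (by nlinarith [pow_pos hdV m])
  -- final assembly
  have hcm : (0:ℝ) < c ^ m := by positivity
  calc Real.log (1 + V.det ^ m) * Real.sqrt g.det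
      ≤ (c ^ m * Q ^ (m * (n-1))) * (Real.sqrt E.det / c ^ m) := by
        apply mul_le_mul hlog ?_ (Real.sqrt_nonneg _) (by positivity)
        rw [le_div_iff₀ hcm]
        linarith [hsqrt]
    _ = Real.sqrt E.det * Q ^ (m * (n-1)) := by
        field_simp
end

section
/- Let N ≥ 1 and let V be a real symmetric 2N×2N matrix. If the complex Hermitian matrix V + iΩ (the entrywise complexification of V plus i times the complexification of Ω) is positive semidefinite, then V is positive definite. -/
open Matrix
open scoped ComplexOrder

/-- The standard 2N×2N symplectic form ⊕_{j=1}^{N} [[0,1],[−1,0]]. -/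
def symplecticForm (N : ℕ) : Matrix (Fin (2 * N)) (Fin (2 * N)) ℝ :=
  Matrix.of fun i j =>
    if i.val % 2 = 0 ∧ j.val = i.val + 1 then (1 : ℝ)
    else if j.val % 2 = 0 ∧ i.val = j.val + 1 then (-1 : ℝ)
    else 0

/-! For real `x`, the Hermitian form of `V + iΩ` at `x` is `xᵀVx`, because `xᵀΩx = 0` by
antisymmetry; hence `V ≥ 0`. If moreover `xᵀVx = 0`, then `x` lies in the kernel of the positive
semidefinite matrix `V + iΩ`, and the imaginary part of `(V + iΩ)x = 0` gives `Ωx = 0`, so `x = 0`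
because `Ω² = -1`. -/

lemma symplecticForm_mul_self (N : ℕ) :
    symplecticForm N * symplecticForm N = -1 := by
  ext i j
  -- row `i` of `symplecticForm N` vanishes off the partner index `i ± 1`
  rw [mul_apply, Finset.sum_eq_single
    (⟨if i.val % 2 = 0 then i.val + 1 else i.val - 1, by split_ifs <;> omega⟩ : Fin (2 * N))]
  · simp only [symplecticForm, of_apply, Matrix.neg_apply, Matrix.one_apply, Fin.ext_iff]
    split_ifs <;> first | omega | norm_num
  · intro k _ hk
    replace hk : k.val ≠ if i.val % 2 = 0 then i.val + 1 else i.val - 1 := fun h => hk (Fin.ext h)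
    simp only [symplecticForm, of_apply]
    split_ifs at hk ⊢ <;> first | omega | norm_num
  · simp

lemma symplecticForm_transpose (N : ℕ) :
    (symplecticForm N)ᵀ = -(symplecticForm N) := by
  ext i j
  simp only [transpose_apply, Matrix.neg_apply, symplecticForm, of_apply]
  split_ifs <;> first | omega | norm_num

lemma isUnit_symplecticForm (N : ℕ) : IsUnit (symplecticForm N) :=
  IsUnit.of_mul_eq_one (-symplecticForm N) (by rw [mul_neg, symplecticForm_mul_self, neg_neg])

lemma dotProduct_mulVec_self_eq_zero_of_transpose_eq_neg {n R : Type*} [Fintype n]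
    [CommRing R] [NoZeroDivisors R] [CharZero R] {A : Matrix n n R} (hA : Aᵀ = -A) (x : n → R) :
    x ⬝ᵥ A *ᵥ x = 0 := by
  have : x ⬝ᵥ A *ᵥ x = -(x ⬝ᵥ A *ᵥ x) := by
    conv_lhs => rw [dotProduct_mulVec, ← mulVec_transpose, hA, neg_mulVec, neg_dotProduct,
      dotProduct_comm]
  exact self_eq_neg.mp this

lemma map_ofReal_mulVec {m n : Type*} [Fintype n] (M : Matrix m n ℝ) (v : n → ℝ) :
    M.map Complex.ofReal *ᵥ (Complex.ofReal ∘ v) = Complex.ofReal ∘ (M *ᵥ v) :=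
  funext fun i => (RingHom.map_mulVec Complex.ofRealHom M v i).symm

lemma ofReal_comp_dotProduct {n : Type*} [Fintype n] (v w : n → ℝ) :
    (Complex.ofReal ∘ v) ⬝ᵥ (Complex.ofReal ∘ w) = ((v ⬝ᵥ w : ℝ) : ℂ) :=
  (RingHom.map_dotProduct Complex.ofRealHom v w).symm

lemma star_ofReal_comp {n : Type*} (v : n → ℝ) : star (Complex.ofReal ∘ v) = Complex.ofReal ∘ v :=
  funext fun i => Complex.conj_ofReal (v i)

theorem posDef_of_posSemidef_add_I_smul {n : Type*} [Fintype n] [DecidableEq n]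
    {V A : Matrix n n ℝ} (hV : V.IsSymm) (hA : Aᵀ = -A) (hA_unit : IsUnit A)
    (h : (V.map Complex.ofReal + Complex.I • A.map Complex.ofReal).PosSemidef) :
    V.PosDef := by
  refine posDef_iff_dotProduct_mulVec.2 ⟨hV, fun x hx => ?_⟩
  rw [star_trivial]
  set z : n → ℂ := Complex.ofReal ∘ x
  have hMz : (V.map Complex.ofReal + Complex.I • A.map Complex.ofReal) *ᵥ z =
      Complex.ofReal ∘ (V *ᵥ x) + Complex.I • Complex.ofReal ∘ (A *ᵥ x) := by
    rw [add_mulVec, smul_mulVec, map_ofReal_mulVec, map_ofReal_mulVec]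
  have hquad : star z ⬝ᵥ (V.map Complex.ofReal + Complex.I • A.map Complex.ofReal) *ᵥ z =
      ((x ⬝ᵥ V *ᵥ x : ℝ) : ℂ) := by
    rw [hMz, star_ofReal_comp, dotProduct_add, dotProduct_smul, ofReal_comp_dotProduct,
      ofReal_comp_dotProduct, dotProduct_mulVec_self_eq_zero_of_transpose_eq_neg hA]
    simp
  have hnonneg : 0 ≤ x ⬝ᵥ V *ᵥ x := by
    exact_mod_cast hquad ▸ h.dotProduct_mulVec_nonneg z
  refine hnonneg.lt_of_ne fun hzero => hx (mulVec_injective_iff_isUnit.2 hA_unit ?_)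
  have hker := (h.dotProduct_mulVec_zero_iff z).1 (by rw [hquad, ← hzero, Complex.ofReal_zero])
  rw [hMz] at hker
  rw [mulVec_zero]
  funext i
  simpa using congrArg Complex.im (congrFun hker i)

theorem posSemidef_add_i_omega_implies_posDef_general {N : ℕ}
    (V : Matrix (Fin (2 * N)) (Fin (2 * N)) ℝ) (hVs : V.IsSymm)
    (h : (V.map (Complex.ofReal) +
            Complex.I • (symplecticForm N).map (Complex.ofReal)).PosSemidef) :
    V.PosDef :=
  posDef_of_posSemidef_add_I_smul hVs (symplecticForm_transpose N) (isUnit_symplecticForm N) h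

theorem posSemidef_add_i_omega_implies_posDef {N : ℕ} (hN : 1 ≤ N)
    (V : Matrix (Fin (2 * N)) (Fin (2 * N)) ℝ) (hVs : V.IsSymm)
    (h : (V.map (Complex.ofReal) +
            Complex.I • (symplecticForm N).map (Complex.ofReal)).PosSemidef) :
    V.PosDef :=
  posSemidef_add_i_omega_implies_posDef_general V hVs h
end
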